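/- arXiv:2206.00586 — 3 statements merged into one kernel-verified Lean document; each statement's English description precedes it below -/
import Mathlib

section
/- Let α and φ be positive integers, τ = αφ, and R̄ ≥ 0 a real number. For each m ∈ {1,…,τ−1}, let x^{(m)} = (x^{(m)}_1,…,x^{(m)}_τ) be a vector of nonnegative reals that is α-smooth with bound R̄. Then ∑_{m=1}^{τ−1} ∑_{j=τ−m+1}^{τ} x^{(m)}_j ≤ (α+1)·φ·R̄/2. -/
/-- A vector `x` (indexed by `1, …, α * φ`) of nonnegative reals is `α`-smooth with
bound `R` if the sum of each block of `φ` consecutive entries is at most `R / α`. -/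
def IsAlphaSmooth (α φ : ℕ) (R : ℝ) (x : ℕ → ℝ) : Prop :=
  ∀ k ∈ Finset.Icc 1 α, ∑ j ∈ Finset.Icc ((k - 1) * φ + 1) (k * φ), x j ≤ R / α

private lemma blocks_sum (f : ℕ → ℝ) (φ : ℕ) (a b : ℕ) (hab : a ≤ b) :
    ∑ j ∈ Finset.Ioc (a * φ) (b * φ), f j
      = ∑ k ∈ Finset.Ioc a b, ∑ j ∈ Finset.Ioc ((k - 1) * φ) (k * φ), f j := by
  induction b, hab using Nat.le_induction with
  | base => simp
  | succ b hab ih =>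
    rw [← Finset.sum_Ioc_consecutive f (Nat.mul_le_mul_right φ hab)
        (Nat.mul_le_mul_right φ (Nat.le_succ b)), ih,
      Finset.sum_Ioc_succ_top hab]
    simp

private lemma pair_bound (α φ m : ℕ) (hφ : 0 < φ) (h1 : 1 ≤ m) (h2 : m ≤ α * φ - 1)
    (hτ : 1 ≤ α * φ) :
    (m + φ - 1) / φ + (α * φ - m + φ - 1) / φ ≤ α + 1 := by
  have hA : (m + φ - 1) / φ * φ ≤ m + φ - 1 := Nat.div_mul_le_self _ _
  have hB : (α * φ - m + φ - 1) / φ * φ ≤ α * φ - m + φ - 1 := Nat.div_mul_le_self _ _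
  have key : ((m + φ - 1) / φ + (α * φ - m + φ - 1) / φ) * φ < (α + 1 + 1) * φ := by
    rw [add_mul, add_mul, add_mul, one_mul]
    omega
  have := Nat.lt_of_mul_lt_mul_right key
  omega

theorem sum_tail_sums_le (α φ : ℕ) (hα : 0 < α) (hφ : 0 < φ) (R : ℝ) (hR : 0 ≤ R)
    (x : ℕ → ℕ → ℝ) (hx : ∀ m ∈ Finset.Icc 1 (α * φ - 1), ∀ j, 0 ≤ x m j)
    (hsmooth : ∀ m ∈ Finset.Icc 1 (α * φ - 1), IsAlphaSmooth α φ R (x m)) :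
    ∑ m ∈ Finset.Icc 1 (α * φ - 1), ∑ j ∈ Finset.Icc (α * φ - m + 1) (α * φ), x m j ≤
      (α + 1) * φ * R / 2 := by
  have hτpos : 0 < α * φ := Nat.mul_pos hα hφ
  have hRα : 0 ≤ R / α := by positivity
  -- per-m bound
  have key : ∀ m ∈ Finset.Icc 1 (α * φ - 1),
      ∑ j ∈ Finset.Icc (α * φ - m + 1) (α * φ), x m j
        ≤ ((m + φ - 1) / φ : ℕ) * (R / α) := by
    intro m hm
    obtain ⟨hm1, hm2⟩ := Finset.mem_Icc.mp hm
    set c := (m + φ - 1) / φ with hc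
    have hcφ : m ≤ c * φ := by
      have h : m + φ - 1 < (m + φ - 1) / φ * φ + φ := Nat.lt_div_mul_add hφ
      rw [← hc] at h
      omega
    have hcα : c ≤ α := by
      have hA : c * φ ≤ m + φ - 1 := Nat.div_mul_le_self _ _
      by_contra h
      push_neg at h
      have : (α + 1) * φ ≤ c * φ := Nat.mul_le_mul_right φ h
      have h4 : (α + 1) * φ = α * φ + φ := by ring
      omega
    have hsub : (α - c) * φ ≤ α * φ - m := by
      have : (α - c) * φ = α * φ - c * φ := Nat.sub_mul α c φ
      omega
    -- tail sum ≤ sum over the last c blocks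
    have step1 : ∑ j ∈ Finset.Icc (α * φ - m + 1) (α * φ), x m j
        ≤ ∑ j ∈ Finset.Ioc ((α - c) * φ) (α * φ), x m j := by
      rw [← Finset.Icc_add_one_left_eq_Ioc]
      apply Finset.sum_le_sum_of_subset_of_nonneg
      · apply Finset.Icc_subset_Icc_left
        omega
      · intro j _ _; exact hx m hm j
    have hacα : α - c ≤ α := Nat.sub_le _ _
    have step2 : ∑ j ∈ Finset.Ioc ((α - c) * φ) (α * φ), x m j
        = ∑ k ∈ Finset.Ioc (α - c) α, ∑ j ∈ Finset.Ioc ((k - 1) * φ) (k * φ), x m j :=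
      blocks_sum _ _ _ _ hacα
    have step3 : ∑ k ∈ Finset.Ioc (α - c) α, ∑ j ∈ Finset.Ioc ((k - 1) * φ) (k * φ), x m j
        ≤ ∑ _k ∈ Finset.Ioc (α - c) α, (R / α) := by
      apply Finset.sum_le_sum
      intro k hk
      obtain ⟨hk1, hk2⟩ := Finset.mem_Ioc.mp hk
      have hk1' : 1 ≤ k := by omega
      have := hsmooth m hm k (Finset.mem_Icc.mpr ⟨hk1', hk2⟩)
      rwa [Finset.Icc_add_one_left_eq_Ioc] at this
    have hcard : (Finset.Ioc (α - c) α).card = c := by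
      rw [Nat.card_Ioc]; omega
    calc ∑ j ∈ Finset.Icc (α * φ - m + 1) (α * φ), x m j
        ≤ ∑ k ∈ Finset.Ioc (α - c) α, ∑ j ∈ Finset.Ioc ((k - 1) * φ) (k * φ), x m j := by
          rw [← step2]; exact step1
      _ ≤ ∑ _k ∈ Finset.Ioc (α - c) α, (R / α) := step3
      _ = (c : ℝ) * (R / α) := by rw [Finset.sum_const, hcard, nsmul_eq_mul]
  -- sum the per-m bounds
  have hsum : ∑ m ∈ Finset.Icc 1 (α * φ - 1), ∑ j ∈ Finset.Icc (α * φ - m + 1) (α * φ), x m j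
      ≤ (↑(∑ m ∈ Finset.Icc 1 (α * φ - 1), (m + φ - 1) / φ) : ℝ) * (R / α) := by
    rw [Nat.cast_sum, Finset.sum_mul]
    exact Finset.sum_le_sum key
  -- bound the sum of ceilings via pairing
  have hrefl : ∑ m ∈ Finset.Icc 1 (α * φ - 1), (α * φ - m + φ - 1) / φ
      = ∑ m ∈ Finset.Icc 1 (α * φ - 1), (m + φ - 1) / φ := by
    apply Finset.sum_nbij' (i := fun m => α * φ - m) (j := fun m => α * φ - m) <;>
      (intro a ha; simp only [Finset.mem_Icc] at ha ⊢) <;> omega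
  have hCsum : 2 * ∑ m ∈ Finset.Icc 1 (α * φ - 1), (m + φ - 1) / φ
      ≤ (α * φ - 1) * (α + 1) := by
    have h2 : 2 * ∑ m ∈ Finset.Icc 1 (α * φ - 1), (m + φ - 1) / φ
        = ∑ m ∈ Finset.Icc 1 (α * φ - 1), ((m + φ - 1) / φ + (α * φ - m + φ - 1) / φ) := by
      rw [Finset.sum_add_distrib, hrefl]; ring
    rw [h2]
    calc ∑ m ∈ Finset.Icc 1 (α * φ - 1), ((m + φ - 1) / φ + (α * φ - m + φ - 1) / φ)
        ≤ ∑ _m ∈ Finset.Icc 1 (α * φ - 1), (α + 1) := by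
          apply Finset.sum_le_sum
          intro m hm
          obtain ⟨hm1, hm2⟩ := Finset.mem_Icc.mp hm
          exact pair_bound α φ m hφ hm1 hm2 hτpos
      _ = (α * φ - 1) * (α + 1) := by
          rw [Finset.sum_const, Nat.card_Icc, Nat.add_sub_cancel, smul_eq_mul]
  -- cast to ℝ and finish
  have hCreal : (↑(∑ m ∈ Finset.Icc 1 (α * φ - 1), (m + φ - 1) / φ) : ℝ)
      ≤ (α : ℝ) * (α + 1) * φ / 2 := by
    have h1 : ((α * φ - 1) * (α + 1) : ℕ) ≤ (α * φ) * (α + 1) :=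
      Nat.mul_le_mul_right _ (Nat.sub_le _ _)
    have h2 := hCsum.trans h1
    have h3 : ((2 * ∑ m ∈ Finset.Icc 1 (α * φ - 1), (m + φ - 1) / φ : ℕ) : ℝ)
        ≤ ((α * φ * (α + 1) : ℕ) : ℝ) := Nat.cast_le.mpr h2
    push_cast at h3 ⊢
    linarith
  have hαR : (0:ℝ) < (α : ℝ) := by exact_mod_cast hα
  calc ∑ m ∈ Finset.Icc 1 (α * φ - 1), ∑ j ∈ Finset.Icc (α * φ - m + 1) (α * φ), x m j
      ≤ (↑(∑ m ∈ Finset.Icc 1 (α * φ - 1), (m + φ - 1) / φ) : ℝ) * (R / α) := hsum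
    _ ≤ ((α : ℝ) * (α + 1) * φ / 2) * (R / α) := by
        apply mul_le_mul_of_nonneg_right hCreal hRα
    _ = (α + 1) * φ * R / 2 := by
        field_simp
end

section
/- Let α and φ be positive integers, τ = αφ, R̄ ≥ 0 a real number, and n a positive integer. Let x^{(1)},…,x^{(n)} be vectors in ℝ^τ, each with nonnegative entries and each α-smooth with bound R̄. Let m_1,…,m_n be integers in {0,…,τ−1} whose nonzero values are pairwise distinct. For each h set r_h = ∑_{j=1}^{τ} x^{(h)}_j and r̃_h = ∑_{j=1}^{τ−m_h} x^{(h)}_j. Then (1/n)·∑_{h=1}^{n} (r_h − r̃_h) ≤ R̄·(α+1)·φ/(2n). -/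
/-- Sum over consecutive blocks is bounded by the number of blocks times `R/α`. -/
lemma blocks_bound (α φ : ℕ) (R : ℝ) (x : ℕ → ℝ) (hs : IsAlphaSmooth α φ R x) :
    ∀ b, b ≤ α → ∀ a, a ≤ b →
      ∑ j ∈ Finset.Ioc (a * φ) (b * φ), x j ≤ ((b : ℝ) - a) * (R / α) := by
  intro b
  induction b with
  | zero =>
    intro _ a ha
    interval_cases a
    simp
  | succ b ih =>
    intro hb a ha
    rcases Nat.lt_or_ge a (b + 1) with h | h
    · have ha' : a ≤ b := Nat.lt_succ_iff.mp h
      have hsplit := Finset.sum_Ioc_consecutive x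
        (Nat.mul_le_mul_right φ ha') (Nat.mul_le_mul_right φ (Nat.le_succ b))
      rw [← hsplit]
      have h1 := ih (Nat.le_of_succ_le hb) a ha'
      have h2 : ∑ j ∈ Finset.Ioc (b * φ) ((b + 1) * φ), x j ≤ R / α := by
        have := hs (b + 1) (Finset.mem_Icc.mpr ⟨Nat.succ_le_succ (Nat.zero_le b), hb⟩)
        simpa [Finset.Icc_add_one_left_eq_Ioc, Nat.succ_sub_one] using this
      have : ((b:ℝ) + 1 - a) * (R / α) = ((b:ℝ) - a) * (R / α) + R / α := by ring
      push_cast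
      linarith
    · have : a = b + 1 := le_antisymm ha h
      subst this
      simp

lemma ceil_facts (α φ : ℕ) (hφ : 0 < φ) (m : ℕ) (hmle : m ≤ α * φ) :
    ((m + φ - 1) / φ : ℕ) ≤ α ∧ m ≤ ((m + φ - 1) / φ) * φ := by
  set c := (m + φ - 1) / φ with hc
  have hdm := Nat.div_add_mod (m + φ - 1) φ
  have hmod : (m + φ - 1) % φ < φ := Nat.mod_lt _ hφ
  rw [← hc] at hdm
  constructor
  · by_contra hcon
    push_neg at hcon
    have h2 : (α + 1) * φ ≤ c * φ := Nat.mul_le_mul_right φ hcon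
    have h3 : (α + 1) * φ = α * φ + φ := by ring
    set p := c * φ with hp
    have hpc : φ * c = p := by rw [hp]; ring
    rw [hpc] at hdm
    omega
  · set p := c * φ with hp
    have hpc : φ * c = p := by rw [hp]; ring
    rw [hpc] at hdm
    omega

lemma sum_ceil (φ : ℕ) (hφ : 0 < φ) :
    ∀ α : ℕ, 2 * ∑ v ∈ Finset.Ioc 0 (α * φ), (v + φ - 1) / φ = φ * α * (α + 1) := by
  intro α
  induction α with
  | zero => simp
  | succ α ih =>
    have hle1 : 0 ≤ α * φ := Nat.zero_le _
    have hle2 : α * φ ≤ (α + 1) * φ := Nat.mul_le_mul_right φ (Nat.le_succ α)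
    rw [← Finset.sum_Ioc_consecutive (fun v => (v + φ - 1) / φ) hle1 hle2]
    have hsec : ∑ v ∈ Finset.Ioc (α * φ) ((α + 1) * φ), (v + φ - 1) / φ = φ * (α + 1) := by
      rw [Finset.sum_congr rfl (fun v hv => ?_), Finset.sum_const, Nat.card_Ioc]
      · have : (α + 1) * φ - α * φ = φ := by
          have : (α + 1) * φ = α * φ + φ := by ring
          omega
        rw [this, smul_eq_mul]
      · -- each term equals α + 1
        rw [Finset.mem_Ioc] at hv
        obtain ⟨h1, h2⟩ := hv
        have hd : (α + 1) * φ = α * φ + φ := by ring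
        have hlow : (α + 1) * φ ≤ v + φ - 1 := by omega
        have hhigh : v + φ - 1 < (α + 1 + 1) * φ := by
          have h3 : (α + 1 + 1) * φ = (α + 1) * φ + φ := by ring
          omega
        exact Nat.div_eq_of_lt_le hlow hhigh
    rw [hsec]
    ring_nf
    ring_nf at ih
    omega

/-- The tail of `m` entries is bounded by `⌈m/φ⌉ · (R/α)`. -/
lemma tail_bound (α φ : ℕ) (hα : 0 < α) (hφ : 0 < φ) (R : ℝ) (hR : 0 ≤ R)
    (x : ℕ → ℝ) (hx : ∀ j, 0 ≤ x j) (hs : IsAlphaSmooth α φ R x)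
    (m : ℕ) (hmle : m ≤ α * φ) :
    ∑ j ∈ Finset.Ioc (α * φ - m) (α * φ), x j ≤ (((m + φ - 1) / φ : ℕ) : ℝ) * (R / α) := by
  obtain ⟨hcα, hmc⟩ := ceil_facts α φ hφ m hmle
  set c := (m + φ - 1) / φ with hc
  have hsub : Finset.Ioc (α * φ - m) (α * φ) ⊆ Finset.Ioc ((α - c) * φ) (α * φ) := by
    apply Finset.Ioc_subset_Ioc_left
    rw [Nat.sub_mul]
    exact Nat.sub_le_sub_left hmc (α * φ)
  calc ∑ j ∈ Finset.Ioc (α * φ - m) (α * φ), x j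
      ≤ ∑ j ∈ Finset.Ioc ((α - c) * φ) (α * φ), x j :=
        Finset.sum_le_sum_of_subset_of_nonneg hsub (fun i _ _ => hx i)
    _ ≤ ((α : ℝ) - (α - c : ℕ)) * (R / α) :=
        blocks_bound α φ R x hs α le_rfl (α - c) (Nat.sub_le α c)
    _ = (c : ℝ) * (R / α) := by
        rw [Nat.cast_sub hcα]; ring

theorem mean_gap_le (α φ : ℕ) (hα : 0 < α) (hφ : 0 < φ) (R : ℝ) (hR : 0 ≤ R)
    (n : ℕ) (hn : 0 < n) (x : ℕ → ℕ → ℝ)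
    (hx : ∀ h ∈ Finset.Icc 1 n, ∀ j, 0 ≤ x h j)
    (hsmooth : ∀ h ∈ Finset.Icc 1 n, IsAlphaSmooth α φ R (x h))
    (m : ℕ → ℕ) (hm : ∀ h ∈ Finset.Icc 1 n, m h ≤ α * φ - 1)
    (hdist : ∀ h ∈ Finset.Icc 1 n, ∀ h' ∈ Finset.Icc 1 n,
      m h ≠ 0 → m h' ≠ 0 → m h = m h' → h = h')
    (r rt : ℕ → ℝ)
    (hr : ∀ h ∈ Finset.Icc 1 n, r h = ∑ j ∈ Finset.Icc 1 (α * φ), x h j)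
    (hrt : ∀ h ∈ Finset.Icc 1 n, rt h = ∑ j ∈ Finset.Icc 1 (α * φ - m h), x h j) :
    (1 / (n : ℝ)) * ∑ h ∈ Finset.Icc 1 n, (r h - rt h) ≤ R * (α + 1) * φ / (2 * n) := by
  have hτ : 0 < α * φ := Nat.mul_pos hα hφ
  have hRα : 0 ≤ R / α := div_nonneg hR (Nat.cast_nonneg α)
  -- gap formula and per-h bound
  have hgap : ∀ h ∈ Finset.Icc 1 n,
      r h - rt h ≤ (((m h + φ - 1) / φ : ℕ) : ℝ) * (R / α) := by
    intro h hh
    have hmh : m h ≤ α * φ := le_trans (hm h hh) (Nat.sub_le _ _)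
    have heq : r h - rt h = ∑ j ∈ Finset.Ioc (α * φ - m h) (α * φ), x h j := by
      rw [hr h hh, hrt h hh]
      rw [show Finset.Icc 1 (α * φ) = Finset.Ioc 0 (α * φ) from Finset.Icc_add_one_left_eq_Ioc 0 _,
          show Finset.Icc 1 (α * φ - m h) = Finset.Ioc 0 (α * φ - m h) from
            Finset.Icc_add_one_left_eq_Ioc 0 _]
      rw [← Finset.sum_Ioc_consecutive (x h) (Nat.zero_le _) (Nat.sub_le (α * φ) (m h))]
      ring
    rw [heq]
    exact tail_bound α φ hα hφ R hR (x h) (hx h hh) (hsmooth h hh) (m h) hmh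
  -- sum of ceilings bound
  set g : ℕ → ℕ := fun v => (v + φ - 1) / φ with hg
  have hsum1 : ∑ h ∈ Finset.Icc 1 n, (r h - rt h)
      ≤ (((∑ h ∈ Finset.Icc 1 n, g (m h)) : ℕ) : ℝ) * (R / α) := by
    push_cast
    rw [Finset.sum_mul]
    exact Finset.sum_le_sum hgap
  have hcount : ∑ h ∈ Finset.Icc 1 n, g (m h) ≤ ∑ v ∈ Finset.Ioc 0 (α * φ), g v := by
    classical
    set S := (Finset.Icc 1 n).filter (fun h => m h ≠ 0) with hS
    have hsplit : ∑ h ∈ Finset.Icc 1 n, g (m h) = ∑ h ∈ S, g (m h) := by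
      rw [hS]
      rw [← Finset.sum_filter_add_sum_filter_not (Finset.Icc 1 n) (fun h => m h ≠ 0)]
      have : ∑ h ∈ (Finset.Icc 1 n).filter (fun h => ¬ m h ≠ 0), g (m h) = 0 := by
        apply Finset.sum_eq_zero
        intro h hh
        rw [Finset.mem_filter] at hh
        have : m h = 0 := by tauto
        rw [hg]
        simp only [this]
        exact Nat.div_eq_of_lt (by omega)
      omega
    rw [hsplit]
    have himg : ∑ h ∈ S, g (m h) = ∑ v ∈ S.image m, g v := by
      rw [Finset.sum_image]
      intro a ha b hb hab
      rw [hS, Finset.mem_coe, Finset.mem_filter] at ha hb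
      exact hdist a ha.1 b hb.1 ha.2 hb.2 hab
    rw [himg]
    apply Finset.sum_le_sum_of_subset
    intro v hv
    rw [Finset.mem_image] at hv
    obtain ⟨h, hh, rfl⟩ := hv
    rw [hS, Finset.mem_filter] at hh
    have := hm h hh.1
    rw [Finset.mem_Ioc]
    omega
  have hceil : 2 * ∑ v ∈ Finset.Ioc 0 (α * φ), g v = φ * α * (α + 1) := sum_ceil φ hφ α
  have hN : ((∑ h ∈ Finset.Icc 1 n, g (m h) : ℕ) : ℝ)
      ≤ (φ : ℝ) * α * (α + 1) / 2 := by
    have h2 : 2 * ∑ h ∈ Finset.Icc 1 n, g (m h) ≤ φ * α * (α + 1) := by omega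
    have h3 : (2 : ℝ) * ((∑ h ∈ Finset.Icc 1 n, g (m h) : ℕ) : ℝ)
        ≤ (φ : ℝ) * α * (α + 1) := by exact_mod_cast h2
    linarith
  -- final arithmetic
  have hfin : ∑ h ∈ Finset.Icc 1 n, (r h - rt h) ≤ R * (α + 1) * φ / 2 := by
    have h1 : (((∑ h ∈ Finset.Icc 1 n, g (m h)) : ℕ) : ℝ) * (R / α)
        ≤ ((φ : ℝ) * α * (α + 1) / 2) * (R / α) :=
      mul_le_mul_of_nonneg_right hN hRα
    have hαR : (α : ℝ) ≠ 0 := Nat.cast_ne_zero.mpr hα.ne'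
    have h2 : ((φ : ℝ) * α * (α + 1) / 2) * (R / α) = R * (α + 1) * φ / 2 := by
      field_simp
    linarith [hsum1]
  have hnR : (0 : ℝ) < n := Nat.cast_pos.mpr hn
  rw [div_eq_mul_inv (R * (↑α + 1) * ↑φ) (2 * (n : ℝ)), mul_inv, one_div, mul_comm]
  calc (∑ h ∈ Finset.Icc 1 n, (r h - rt h)) * (n : ℝ)⁻¹
      ≤ (R * (α + 1) * φ / 2) * (n : ℝ)⁻¹ := by
        apply mul_le_mul_of_nonneg_right hfin (by positivity)
    _ = R * (↑α + 1) * ↑φ * (2⁻¹ * (↑n)⁻¹) := by ring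
end

section
/- Let α and φ be positive integers and let Δ > 0, R̄ > 0, and t > 1 be real numbers. If a real number s satisfies s ≥ R̄(α+1)φ/Δ + (4R̄²·ln t)/(α·Δ²) · (1 + √(1 + α(α+1)φΔ/(2R̄·ln t))), then s > 0 and Δ ≥ 2·( R̄·√(2·ln t/(α·s)) + φ·R̄·(α+1)/(2s) ). -/
set_option maxHeartbeats 1000000


theorem fr_threshold (α φ : ℕ) (hα : 0 < α) (hφ : 0 < φ)
    (Δ R t s : ℝ) (hΔ : 0 < Δ) (hR : 0 < R) (ht : 1 < t)
    (hs : s ≥ R * (α + 1) * φ / Δ +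
      (4 * R ^ 2 * Real.log t) / (α * Δ ^ 2) *
        (1 + Real.sqrt (1 + α * (α + 1) * φ * Δ / (2 * R * Real.log t)))) :
    0 < s ∧
      Δ ≥ 2 * (R * Real.sqrt (2 * Real.log t / (α * s)) + φ * R * (α + 1) / (2 * s)) := by
  have hL : 0 < Real.log t := Real.log_pos ht
  set L := Real.log t with hLdef
  have ha : (0:ℝ) < (α:ℝ) := by exact_mod_cast hα
  have hp : (0:ℝ) < (φ:ℝ) := by exact_mod_cast hφ
  set a := (α:ℝ) with hadef
  set p := (φ:ℝ) with hpdef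
  have hm : (0:ℝ) < R^2*L/a := by positivity
  set m := R^2*L/a with hmdef
  have ham : a * m = R^2 * L := by rw [hmdef]; field_simp
  set X := 1 + a * (a+1) * p * Δ / (2*R*L) with hXdef
  have hXnn : (0:ℝ) ≤ X := by rw [hXdef]; positivity
  set D := (8*m)^2 * X with hDdef
  have hDnn : (0:ℝ) ≤ D := by rw [hDdef]; positivity
  have hsqD : Real.sqrt D = 8*m*Real.sqrt X := by
    rw [hDdef, Real.sqrt_mul (by positivity), Real.sqrt_sq (by positivity)]
  have hDval : D = 64*m^2 + 32*m*R*(a+1)*p*Δ := by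
    rw [hDdef, hXdef, hmdef]
    field_simp
    ring
  -- rewrite the hypothesis
  have hs' : (2*Δ*p*R*(a+1) + 8*m + Real.sqrt D)/(2*Δ^2) ≤ s := by
    rw [hsqD]
    have heq : (2*Δ*p*R*(a+1) + 8*m + 8*m*Real.sqrt X)/(2*Δ^2)
        = R*(a+1)*p/Δ + (4*R^2*L)/(a*Δ^2)*(1+Real.sqrt X) := by
      rw [hmdef]; field_simp; ring
    rw [heq]; exact hs
  have h1 : 2*Δ^2*s - (2*Δ*p*R*(a+1) + 8*m) ≥ Real.sqrt D := by
    rw [div_le_iff₀ (by positivity)] at hs'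
    linarith
  have hsnn := Real.sqrt_nonneg D
  have hspos : 0 < s := by nlinarith [mul_pos hΔ hΔ, mul_pos (mul_pos hΔ hp) hR]
  have hsq : (2*Δ^2*s - (2*Δ*p*R*(a+1) + 8*m))^2 ≥ D := by
    nlinarith [Real.sq_sqrt hDnn]
  have h3 : 2*Δ^2*s ≥ 2*Δ*p*R*(a+1) + 8*m := by linarith
  have hgap : Δ*s - p*R*(a+1) ≥ 0 := by nlinarith [h3, hm, hΔ]
  have hmain : (Δ*s - p*R*(a+1))^2 ≥ 8*m*s := by
    nlinarith [hsq, hDval, mul_pos hΔ hΔ]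
  refine ⟨hspos, ?_⟩
  have key : Real.sqrt (2*L/(a*s)) ≤ (Δ*s - p*R*(a+1))/(2*R*s) := by
    rw [show (Δ*s - p*R*(a+1))/(2*R*s)
        = Real.sqrt (((Δ*s - p*R*(a+1))/(2*R*s))^2) from
      (Real.sqrt_sq (by positivity)).symm]
    apply Real.sqrt_le_sqrt
    rw [div_pow, div_le_div_iff₀ (by positivity) (by positivity)]
    have h2 := mul_le_mul_of_nonneg_right hmain (by positivity : (0:ℝ) ≤ a*s)
    have h8 : 8*(a*m)*s^2 = 8*(R^2*L)*s^2 := by rw [ham]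
    nlinarith [h2, h8]
  calc 2 * (R * Real.sqrt (2 * L / (a * s)) + p * R * (a + 1) / (2 * s))
      ≤ 2 * (R * ((Δ*s - p*R*(a+1))/(2*R*s)) + p * R * (a + 1) / (2 * s)) := by
        gcongr
    _ = Δ := by field_simp; ring
end
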